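/- Let N ≥ 1, A ∈ ℝ^{2N×2N}, B ∈ ℝ^{2N×N}, and let P, Q be symmetric real 2N×2N matrices with AᵀP + PA = −Q. Assume there is λ_Q > 0 such that ⟨x, Q x⟩ ≥ λ_Q ‖x‖² for all x ∈ ℝ^{2N}. Let ε > 0, ρ̄ > 0, and let η, ρ : ℝ → ℝ^N × ℝ be functions with ‖η(t)‖ ≤ ρ(t) ≤ ρ̄ for all t. Let e : ℝ → ℝ^{2N} be differentiable and satisfy ė(t) = A e(t) + B(r(t) + η(t)), where w(t) = Bᵀ P e(t) and r(t) = −ρ(t) w(t)/‖w(t)‖ if ‖w(t)‖ > ε and r(t) = −ρ(t) w(t)/ε if ‖w(t)‖ ≤ ε. Then for every time t₀ at which ‖e(t₀)‖ > √(ε ρ̄ / (2 λ_Q)), the derivative of the Lyapunov function V(t) = ⟨e(t), P e(t)⟩ satisfies V̇(t₀) < 0. That is, V is strictly decreasing whenever the tracking error lies outside the ball of radius δ = √(ε ρ̄ / (2 λ_Q)) centered at the origin. -/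

import Mathlib

/-!
Along the error dynamics, `V̇ = -⟨e, Q e⟩ + 2 ⟨r + η, w⟩` with `w = BᵀP e`, by the Lyapunov
equation. The robust control law makes the cross term small: outside the boundary layer
`‖w‖ > ε` it cancels the uncertainty, `⟨r + η, w⟩ ≤ -ρ‖w‖ + ρ‖w‖ = 0`, and inside it
`⟨r + η, w⟩ ≤ ρ‖w‖ - (ρ/ε)‖w‖² ≤ ερ/4`. Hence `V̇ ≤ -λ_Q ‖e‖² + ερ̄/2`, which is negative
as soon as `‖e‖² > ερ̄/(2λ_Q)`.
-/

open Matrix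
open scoped RealInnerProductSpace

/-- Matrix-vector multiplication viewed as a map between Euclidean spaces. -/
noncomputable def mv {m n : ℕ} (A : Matrix (Fin m) (Fin n) ℝ)
    (x : EuclideanSpace ℝ (Fin n)) : EuclideanSpace ℝ (Fin m) :=
  (EuclideanSpace.equiv (Fin m) ℝ).symm (A.mulVec ((EuclideanSpace.equiv (Fin n) ℝ) x))

section MatrixVector

variable {m n k : ℕ}

lemma inner_mv_left (M : Matrix (Fin m) (Fin n) ℝ) (x : EuclideanSpace ℝ (Fin n))
    (y : EuclideanSpace ℝ (Fin m)) : ⟪mv M x, y⟫ = ⟪x, mv Mᵀ y⟫ := by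
  simp only [mv, PiLp.inner_apply, RCLike.inner_apply, conj_trivial]
  show y.ofLp ⬝ᵥ (M *ᵥ x.ofLp) = (Mᵀ *ᵥ y.ofLp) ⬝ᵥ x.ofLp
  rw [dotProduct_mulVec, mulVec_transpose]

lemma mv_mul (M : Matrix (Fin m) (Fin n) ℝ) (M' : Matrix (Fin n) (Fin k) ℝ)
    (x : EuclideanSpace ℝ (Fin k)) : mv (M * M') x = mv M (mv M' x) := by
  simp only [mv, ← mulVec_mulVec]
  rfl

lemma mv_add_left (M M' : Matrix (Fin m) (Fin n) ℝ) (x : EuclideanSpace ℝ (Fin n)) :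
    mv (M + M') x = mv M x + mv M' x := by
  simp [mv, add_mulVec]

lemma mv_neg_left (M : Matrix (Fin m) (Fin n) ℝ) (x : EuclideanSpace ℝ (Fin n)) :
    mv (-M) x = -mv M x := by
  simp [mv, neg_mulVec]

lemma hasDerivAt_mv (M : Matrix (Fin m) (Fin n) ℝ) {e : ℝ → EuclideanSpace ℝ (Fin n)}
    {d : EuclideanSpace ℝ (Fin n)} {t : ℝ} (h : HasDerivAt e d t) :
    HasDerivAt (fun s => mv M (e s)) (mv M d) t :=
  (LinearMap.toContinuousLinearMap (toEuclideanLin M)).hasFDerivAt.comp_hasDerivAt t h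

end MatrixVector

section Lyapunov

variable {n k : ℕ} {A P Q : Matrix (Fin n) (Fin n) ℝ}

lemma hasDerivAt_inner_mv_self (hP : P.IsSymm) {e : ℝ → EuclideanSpace ℝ (Fin n)}
    {d : EuclideanSpace ℝ (Fin n)} {t : ℝ} (h : HasDerivAt e d t) :
    HasDerivAt (fun s => ⟪e s, mv P (e s)⟫) (2 * ⟪mv P (e t), d⟫) t := by
  refine (h.inner ℝ (hasDerivAt_mv P h)).congr_deriv ?_
  rw [real_inner_comm, inner_mv_left, hP.eq, real_inner_comm d]
  ring

lemma two_mul_inner_mv_self_of_lyapunov (hP : P.IsSymm) (hLyap : Aᵀ * P + P * A = -Q)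
    (x : EuclideanSpace ℝ (Fin n)) : 2 * ⟪mv P x, mv A x⟫ = -⟪x, mv Q x⟫ := by
  have hPA : ⟪mv P x, mv A x⟫ = ⟪x, mv (P * A) x⟫ := by
    rw [inner_mv_left, hP.eq, mv_mul]
  have hAP : ⟪mv P x, mv A x⟫ = ⟪x, mv (Aᵀ * P) x⟫ := by
    rw [real_inner_comm, inner_mv_left, mv_mul]
  rw [two_mul]
  nth_rw 1 [hAP]
  rw [hPA, ← inner_add_right, ← mv_add_left, hLyap, mv_neg_left, inner_neg_right]

lemma hasDerivAt_lyapunov (hP : P.IsSymm) (hLyap : Aᵀ * P + P * A = -Q)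
    (B : Matrix (Fin n) (Fin k) ℝ) {e : ℝ → EuclideanSpace ℝ (Fin n)}
    {u : EuclideanSpace ℝ (Fin k)} {t : ℝ} (h : HasDerivAt e (mv A (e t) + mv B u) t) :
    HasDerivAt (fun s => ⟪e s, mv P (e s)⟫)
      (-⟪e t, mv Q (e t)⟫ + 2 * ⟪u, mv Bᵀ (mv P (e t))⟫) t := by
  refine (hasDerivAt_inner_mv_self hP h).congr_deriv ?_
  rw [inner_add_right, mul_add, two_mul_inner_mv_self_of_lyapunov hP hLyap,
    real_inner_comm (mv B u), inner_mv_left]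

end Lyapunov

section RobustControl

variable {E : Type*} [NormedAddCommGroup E] [InnerProductSpace ℝ E]

noncomputable def robustControl (ε ρ : ℝ) (w : E) : E :=
  if ε < ‖w‖ then (-(ρ / ‖w‖)) • w else (-(ρ / ε)) • w

variable {ε ρ : ℝ} {w : E}

lemma inner_robustControl_self_of_lt (h : ε < ‖w‖) :
    ⟪robustControl ε ρ w, w⟫ = -(ρ * ‖w‖) := by
  rw [robustControl, if_pos h, real_inner_smul_left, real_inner_self_eq_norm_sq]
  rcases eq_or_ne ‖w‖ 0 with hw | hw
  · simp [hw]
  · field_simp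

lemma inner_robustControl_self_of_le (h : ‖w‖ ≤ ε) :
    ⟪robustControl ε ρ w, w⟫ = -(ρ / ε * ‖w‖ ^ 2) := by
  rw [robustControl, if_neg h.not_gt, real_inner_smul_left, real_inner_self_eq_norm_sq,
    neg_mul]

lemma inner_robustControl_add_le (hε : 0 < ε) {η : E} (hη : ‖η‖ ≤ ρ) :
    ⟪robustControl ε ρ w + η, w⟫ ≤ ε * ρ / 4 := by
  have hρ : 0 ≤ ρ := (norm_nonneg η).trans hη
  have hηw : ⟪η, w⟫ ≤ ρ * ‖w‖ :=
    (real_inner_le_norm η w).trans (mul_le_mul_of_nonneg_right hη (norm_nonneg w))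
  rw [inner_add_left]
  rcases lt_or_ge ε ‖w‖ with hout | hin
  · rw [inner_robustControl_self_of_lt hout]
    nlinarith [mul_nonneg hε.le hρ]
  · rw [inner_robustControl_self_of_le hin]
    -- `ρ s - (ρ/ε) s² = ερ/4 - (ρ/ε)(s - ε/2)²`
    have hsq : 0 ≤ ρ / ε * (‖w‖ - ε / 2) ^ 2 := by positivity
    have hexpand : ρ / ε * (‖w‖ - ε / 2) ^ 2 = ρ / ε * ‖w‖ ^ 2 - ρ * ‖w‖ + ε * ρ / 4 := by
      field_simp
      ring
    linarith

end RobustControl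

theorem lyapunov_strictly_decreasing_outside_ball_general
    (N : ℕ)
    (A : Matrix (Fin (2 * N)) (Fin (2 * N)) ℝ)
    (B : Matrix (Fin (2 * N)) (Fin N) ℝ)
    (P Q : Matrix (Fin (2 * N)) (Fin (2 * N)) ℝ)
    (hP : P.IsSymm)
    (hLyap : Aᵀ * P + P * A = -Q)
    (lamQ : ℝ) (hlamQ : 0 < lamQ)
    (hQlb : ∀ x : EuclideanSpace ℝ (Fin (2 * N)), lamQ * ‖x‖ ^ 2 ≤ ⟪x, mv Q x⟫)
    (ε ρbar : ℝ) (hε : 0 < ε)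
    (η : ℝ → EuclideanSpace ℝ (Fin N)) (ρ : ℝ → ℝ)
    (hηρ : ∀ t, ‖η t‖ ≤ ρ t) (hρ : ∀ t, ρ t ≤ ρbar)
    (e : ℝ → EuclideanSpace ℝ (Fin (2 * N)))
    (w : ℝ → EuclideanSpace ℝ (Fin N))
    (hw : ∀ t, w t = mv Bᵀ (mv P (e t)))
    (r : ℝ → EuclideanSpace ℝ (Fin N))
    (hr : ∀ t, r t =
      if ε < ‖w t‖ then (-(ρ t / ‖w t‖)) • w t else (-(ρ t / ε)) • w t)
    (he : ∀ t, HasDerivAt e (mv A (e t) + mv B (r t + η t)) t) :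
    ∀ t₀, Real.sqrt (ε * ρbar / (2 * lamQ)) < ‖e t₀‖ →
      deriv (fun s => ⟪e s, mv P (e s)⟫) t₀ < 0 := by
  intro t₀ ht₀
  rw [(hasDerivAt_lyapunov hP hLyap B (he t₀)).deriv, ← hw]
  have hcross : ⟪r t₀ + η t₀, w t₀⟫ ≤ ε * ρbar / 4 := by
    rw [hr t₀]
    exact (inner_robustControl_add_le hε (hηρ t₀)).trans (by gcongr; exact hρ t₀)
  have hball : ε * ρbar / 2 < lamQ * ‖e t₀‖ ^ 2 := by
    have := Real.lt_sq_of_sqrt_lt ht₀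
    rw [div_lt_iff₀ (by positivity)] at this
    linarith
  linarith [hQlb (e t₀)]

/-- Under the robust outer-loop control law, with
`AᵀP + PA = −Q`, `⟨x, Qx⟩ ≥ λ_Q ‖x‖²`, `‖η(t)‖ ≤ ρ(t) ≤ ρ̄`,
`w(t) = BᵀP e(t)`, and `r(t) = −ρ(t) w(t)/‖w(t)‖` if `‖w(t)‖ > ε`,
`r(t) = −ρ(t) w(t)/ε` otherwise, the Lyapunov function
`V(t) = ⟨e(t), P e(t)⟩` along the error dynamics `ė = A e + B (r + η)` is
strictly decreasing whenever `‖e(t₀)‖ > √(ε ρ̄ / (2 λ_Q))`. -/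
theorem lyapunov_strictly_decreasing_outside_ball
    (N : ℕ) (hN : 1 ≤ N)
    (A : Matrix (Fin (2 * N)) (Fin (2 * N)) ℝ)
    (B : Matrix (Fin (2 * N)) (Fin N) ℝ)
    (P Q : Matrix (Fin (2 * N)) (Fin (2 * N)) ℝ)
    (hP : P.IsSymm) (hQ : Q.IsSymm)
    (hLyap : Aᵀ * P + P * A = -Q)
    (lamQ : ℝ) (hlamQ : 0 < lamQ)
    (hQlb : ∀ x : EuclideanSpace ℝ (Fin (2 * N)), lamQ * ‖x‖ ^ 2 ≤ ⟪x, mv Q x⟫)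
    (ε ρbar : ℝ) (hε : 0 < ε) (hρbar : 0 < ρbar)
    (η : ℝ → EuclideanSpace ℝ (Fin N)) (ρ : ℝ → ℝ)
    (hηρ : ∀ t, ‖η t‖ ≤ ρ t) (hρ : ∀ t, ρ t ≤ ρbar)
    (e : ℝ → EuclideanSpace ℝ (Fin (2 * N)))
    (w : ℝ → EuclideanSpace ℝ (Fin N))
    (hw : ∀ t, w t = mv Bᵀ (mv P (e t)))
    (r : ℝ → EuclideanSpace ℝ (Fin N))
    (hr : ∀ t, r t =
      if ε < ‖w t‖ then (-(ρ t / ‖w t‖)) • w t else (-(ρ t / ε)) • w t)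
    (he : ∀ t, HasDerivAt e (mv A (e t) + mv B (r t + η t)) t) :
    ∀ t₀, Real.sqrt (ε * ρbar / (2 * lamQ)) < ‖e t₀‖ →
      deriv (fun s => ⟪e s, mv P (e s)⟫) t₀ < 0 :=
  lyapunov_strictly_decreasing_outside_ball_general N A B P Q hP hLyap lamQ hlamQ hQlb ε ρbar hε η ρ
    hηρ hρ e w hw r hr he
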